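/- Let K be a field, f ∈ K[x] of degree n with f(0) ≠ 0, and 1 ≤ m ≤ n. There exists a nonzero polynomial Δ_{f,m} ∈ K[ā_0, …, ā_{n−1}] whose total degree satisfies m·deg(Δ_{f,m}) ≤ 2n² such that, for every a = a_0 + a_1·x + ⋯ + a_{n−1}·x^{n−1} ∈ K[x], if Δ_{f,m}(a_0, …, a_{n−1}) ≠ 0 then the block Hankel matrix Hk_{m,d}(a,f) ∈ K^{(md)×(md)} has rank n for every d ≥ ⌈n/m⌉. -/

import Mathlib

/-!
`Hk_{m,d}(a,f)` factors through `K^n` as `O · C`, where `O` stacks the rows `Xᵀ M_a^i` and `C`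
the columns `M_a^j X`, so its rank is at most `n`. At the point `a = x^m mod f` both factors have
rank `n` as soon as `m d ≥ n`. Column `(i, j)` of `C` is `x^(mi+j) mod f`, so `C` contains every
monomial `x^t`, `t < n`. If `O p = 0`, then `x^m` divides every `x^(mi) p mod f`; since `f` is
prime to `x`, inductively no reduction takes place, so `x^(m(d-1)) p` has degree `< n` and is
divisible by `x^(md)`, whence `p = 0`.

Take there a left inverse `U` of `O` and `n` columns `σ` on which `C` is the identity. Then `Δ` is
the determinant of `U · Hk.submatrix id σ` for the generic `a = ∑ ā_j x^j`: it equals `1` at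
`x^m mod f`, and for `d = ⌈n/m⌉` its matrix entries have degree `≤ 2(d - 1)`, so
`m · deg Δ ≤ 2 n m (d - 1) ≤ 2 n²`. Where `Δ(a) ≠ 0` the rank of `Hk_{m,d}(a,f)`, hence of its
extensions `Hk_{m,d'}(a,f)`, is at least `n`.
-/

open Polynomial Matrix

noncomputable section

variable {K : Type*} [Field K]

/-- Matrix of multiplication by `a` modulo `f` in the basis `1, x, ..., x^(n-1)`. -/
def mulMat (f a : K[X]) (n : ℕ) : Matrix (Fin n) (Fin n) K :=
  fun i k => ((X ^ (k : ℕ) * a) % f).coeff (i : ℕ)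

/-- The `n×m` matrix `X` whose top `m×m` block is the identity. -/
def Xup (α : Type*) [Zero α] [One α] (n m : ℕ) : Matrix (Fin n) (Fin m) α :=
  fun i j => if (i : ℕ) = (j : ℕ) then 1 else 0

/-- The block Hankel matrix `Hk_{m,d}(a,f)`, indexed by `Fin d × Fin m`. -/
def hankelMat (f a : K[X]) (n m d : ℕ) :
    Matrix (Fin d × Fin m) (Fin d × Fin m) K :=
  fun p q => ((Xup K n m)ᵀ * (mulMat f a n) ^ ((p.1 : ℕ) + (q.1 : ℕ)) * Xup K n m) p.2 q.2

namespace Polynomial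

theorem mod_eq_mod_iff_dvd_sub {f p q : K[X]} : p % f = q % f ↔ f ∣ p - q := by
  rw [← sub_eq_zero, ← sub_mod, EuclideanDomain.mod_eq_zero]

theorem dvd_sub_mod (f p : K[X]) : f ∣ p - p % f := by
  rw [EuclideanDomain.mod_eq_sub_mul_div, sub_sub_cancel]
  exact dvd_mul_right f _

theorem mul_mod_mod (f g p : K[X]) : g * (p % f) % f = g * p % f :=
  mod_eq_mod_iff_dvd_sub.2 <| by
    rw [← mul_sub]; exact (dvd_sub_comm.1 (dvd_sub_mod f p)).mul_left g

theorem pow_mod_mul_mod (f p g : K[X]) (i : ℕ) : (p % f) ^ i * g % f = p ^ i * g % f :=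
  mod_eq_mod_iff_dvd_sub.2 <| by
    rw [← sub_mul]
    exact ((dvd_sub_comm.1 (dvd_sub_mod f p)).trans (sub_dvd_pow_sub_pow _ _ i)).mul_right g

theorem mul_mod_eq_sum {n : ℕ} (f r g : K[X]) (hr : r.degree < n) :
    r * g % f = ∑ j ∈ Finset.range n, r.coeff j • (X ^ j * g % f) := by
  rcases eq_or_ne r 0 with rfl | hr0
  · simp
  -- `· % f` is, by definition, the `K`-linear reduction modulo the monic associate of `f`.
  have hmod : ∀ p : K[X], p % f = modByMonicHom (f * C f.leadingCoeff⁻¹) p := fun _ => rfl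
  simp only [hmod, ← map_smul, ← map_sum]
  conv_lhs => rw [as_sum_range_C_mul_X_pow' r ((natDegree_lt_iff_degree_lt hr0).2 hr)]
  simp only [Finset.sum_mul, smul_eq_C_mul, mul_assoc]

theorem mul_mod_eq_mul_of_dvd {f q r : K[X]} (hfq : IsCoprime f q) (hr : r.degree < f.degree)
    (h : q ∣ q * r % f) : q * r % f = q * r := by
  have hf : f ≠ 0 := by rintro rfl; simp at hr
  rcases eq_or_ne q 0 with rfl | hq
  · simp
  obtain ⟨s, hs⟩ := h
  have hs_deg : s.degree < f.degree :=
    (degree_le_mul_left s hq).trans_lt <| by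
      rw [mul_comm, ← hs]; exact EuclideanDomain.mod_lt _ hf
  have hrs : f ∣ r - s :=
    hfq.dvd_of_dvd_mul_left <| by rw [mul_sub, ← hs]; exact dvd_sub_mod f _
  have hrs' : r - s = 0 :=
    eq_zero_of_dvd_of_degree_lt hrs <| (degree_sub_le r s).trans_lt (max_lt hr hs_deg)
  rw [hs, sub_eq_zero.1 hrs']

theorem eq_zero_of_X_pow_dvd_mod {f p : K[X]} (hf0 : f.eval 0 ≠ 0) {m d : ℕ}
    (hfd : f.natDegree ≤ m * d) (hp : p.degree < f.degree)
    (h : ∀ i < d, X ^ m ∣ X ^ (m * i) * p % f) : p = 0 := by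
  have hf : f ≠ 0 := by rintro rfl; simp at hf0
  have hcop : IsCoprime f (X ^ m) := by
    refine (irreducible_X.coprime_iff_not_dvd.2 ?_).symm.pow_right
    rwa [X_dvd_iff, coeff_zero_eq_eval_zero]
  rcases d with _ | d
  · have : p.degree < 0 := hp.trans_le (degree_le_of_natDegree_le hfd)
    simpa using this
  have hred : ∀ i ≤ d, X ^ (m * i) * p % f = X ^ (m * i) * p := by
    intro i
    induction i with
    | zero => intro _; simpa using (mod_eq_self_iff hf).2 hp
    | succ i ih =>
      intro hi
      have hdeg : (X ^ (m * i) * p).degree < f.degree :=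
        ih (by omega) ▸ EuclideanDomain.mod_lt _ hf
      have hdvd := h (i + 1) (by omega)
      rw [mul_add, mul_one, pow_add, mul_comm (X ^ (m * i)), mul_assoc] at hdvd ⊢
      exact mul_mod_eq_mul_of_dvd hcop hdeg hdvd
  have hXp : X ^ m ∣ p := by simpa [(mod_eq_self_iff hf).2 hp] using h 0 d.succ_pos
  have hdvd : X ^ (m * (d + 1)) ∣ X ^ (m * d) * p := by
    rw [mul_add, mul_one, pow_add]; exact mul_dvd_mul_left _ hXp
  have hdeg : (X ^ (m * d) * p).degree < (X ^ (m * (d + 1)) : K[X]).degree := by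
    rw [← hred d le_rfl, degree_X_pow]
    exact (EuclideanDomain.mod_lt _ hf).trans_le (degree_le_of_natDegree_le hfd)
  simpa using eq_zero_of_dvd_of_degree_lt hdvd hdeg

end Polynomial

namespace Matrix

variable {σ R ι κ μ : Type*}

theorem exists_mul_eq_one_of_injective_mulVec [Fintype ι] [Fintype κ] [DecidableEq κ]
    {A : Matrix ι κ K} (hA : Function.Injective A.mulVec) :
    ∃ B : Matrix κ ι K, B * A = 1 := by
  classical
  obtain ⟨g, hg⟩ := (toLin' A).exists_leftInverse_of_injective (LinearMap.ker_eq_bot.2 hA)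
  refine ⟨LinearMap.toMatrix' g, ?_⟩
  simpa [LinearMap.toMatrix'_comp] using congrArg LinearMap.toMatrix' hg

theorem totalDegree_mul_apply_le [CommSemiring R] [Fintype κ]
    {A : Matrix ι κ (MvPolynomial σ R)} {B : Matrix κ μ (MvPolynomial σ R)} {a b : ℕ}
    (hA : ∀ i k, (A i k).totalDegree ≤ a) (hB : ∀ k l, (B k l).totalDegree ≤ b)
    (i : ι) (l : μ) : ((A * B) i l).totalDegree ≤ a + b :=
  (MvPolynomial.totalDegree_finsetSum _ _).trans <| Finset.sup_le fun k _ =>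
    (MvPolynomial.totalDegree_mul _ _).trans (add_le_add (hA i k) (hB k l))

theorem totalDegree_pow_apply_le [CommSemiring R] [Fintype ι] [DecidableEq ι]
    {M : Matrix ι ι (MvPolynomial σ R)} {D : ℕ} (hM : ∀ i j, (M i j).totalDegree ≤ D) (e : ℕ)
    (i j : ι) : ((M ^ e) i j).totalDegree ≤ e * D := by
  induction e generalizing i j with
  | zero => rw [pow_zero, one_apply]; split_ifs <;> simp
  | succ e ih => rw [pow_succ, add_mul, one_mul]; exact totalDegree_mul_apply_le ih hM i j

theorem totalDegree_det_le [CommRing R] [Fintype ι] [DecidableEq ι]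
    {A : Matrix ι ι (MvPolynomial σ R)} {D : ℕ} (hA : ∀ i j, (A i j).totalDegree ≤ D) :
    A.det.totalDegree ≤ Fintype.card ι * D := by
  rw [det_apply]
  refine (MvPolynomial.totalDegree_finsetSum _ _).trans <| Finset.sup_le fun τ _ => ?_
  refine (MvPolynomial.totalDegree_smul_le _ _).trans <|
    (MvPolynomial.totalDegree_finsetProd _ _).trans ?_
  simpa using Finset.sum_le_sum fun i (_ : i ∈ Finset.univ) => hA (τ i) i

end Matrix

section BlockHankel

variable {R : Type*} [CommSemiring R] {n : ℕ}

def blockHankel (M : Matrix (Fin n) (Fin n) R) (m d : ℕ) :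
    Matrix (Fin d × Fin m) (Fin d × Fin m) R :=
  fun p q => ((Xup R n m)ᵀ * M ^ ((p.1 : ℕ) + (q.1 : ℕ)) * Xup R n m) p.2 q.2

def leftKrylov (M : Matrix (Fin n) (Fin n) R) (m d : ℕ) : Matrix (Fin d × Fin m) (Fin n) R :=
  fun p k => ((Xup R n m)ᵀ * M ^ (p.1 : ℕ)) p.2 k

def rightKrylov (M : Matrix (Fin n) (Fin n) R) (m d : ℕ) : Matrix (Fin n) (Fin d × Fin m) R :=
  fun k q => (M ^ (q.1 : ℕ) * Xup R n m) k q.2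

theorem hankelMat_eq_blockHankel (f a : K[X]) (n m d : ℕ) :
    hankelMat f a n m d = blockHankel (mulMat f a n) m d :=
  rfl

theorem blockHankel_eq_mul (M : Matrix (Fin n) (Fin n) R) (m d : ℕ) :
    blockHankel M m d = leftKrylov M m d * rightKrylov M m d := by
  ext p q
  have hsplit : (Xup R n m)ᵀ * M ^ ((p.1 : ℕ) + (q.1 : ℕ)) * Xup R n m
      = ((Xup R n m)ᵀ * M ^ (p.1 : ℕ)) * (M ^ (q.1 : ℕ) * Xup R n m) := by
    rw [pow_add, ← Matrix.mul_assoc, ← Matrix.mul_assoc]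
  exact congrFun (congrFun hsplit p.2) q.2

theorem rank_blockHankel_le [StrongRankCondition R] (M : Matrix (Fin n) (Fin n) R) (m d : ℕ) :
    (blockHankel M m d).rank ≤ n := by
  rw [blockHankel_eq_mul]
  exact (rank_mul_le_left _ _).trans ((rank_le_card_width _).trans_eq (Fintype.card_fin n))

theorem Xup_map {S : Type*} [CommSemiring S] (φ : R →+* S) {m : ℕ} :
    (Xup R n m).map φ = Xup S n m := by
  ext i j
  simp only [map_apply, Xup, apply_ite φ, map_one, map_zero]

theorem blockHankel_map {S : Type*} [CommSemiring S] (φ : R →+* S)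
    (M : Matrix (Fin n) (Fin n) R) (m d : ℕ) :
    (blockHankel M m d).map φ = blockHankel (M.map φ) m d := by
  ext p q
  simp only [blockHankel, map_apply]
  rw [← map_apply (f := φ), Matrix.map_mul, Matrix.map_mul, transpose_map, Xup_map,
    ← RingHom.mapMatrix_apply, map_pow, RingHom.mapMatrix_apply]

theorem Xup_transpose_mul_apply {ι : Type*} {m : ℕ} (hmn : m ≤ n) (A : Matrix (Fin n) ι R)
    (j : Fin m) (k : ι) : ((Xup R n m)ᵀ * A) j k = A (Fin.castLE hmn j) k := by
  rw [Matrix.mul_apply, Finset.sum_eq_single (Fin.castLE hmn j)]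
  · simp [Xup]
  · intro l _ hl
    simp_all [Xup, Fin.ext_iff]
  · simp

theorem totalDegree_blockHankel_apply_le {σ : Type*} {m d D : ℕ}
    {M : Matrix (Fin n) (Fin n) (MvPolynomial σ R)} (hM : ∀ i j, (M i j).totalDegree ≤ D)
    (p q : Fin d × Fin m) : (blockHankel M m d p q).totalDegree ≤ ((p.1 : ℕ) + q.1) * D := by
  have hX : ∀ i j, (Xup (MvPolynomial σ R) n m i j).totalDegree ≤ 0 := by
    intro i j; rw [Xup]; split_ifs <;> simp
  have h := totalDegree_mul_apply_le (totalDegree_mul_apply_le (A := (Xup _ n m)ᵀ)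
    (fun j i => hX i j) (totalDegree_pow_apply_le hM ((p.1 : ℕ) + q.1))) hX p.2 q.2
  rwa [zero_add, add_zero] at h

end BlockHankel

section MulMat

variable {f : K[X]} {n : ℕ}

theorem mulMat_mulVec (a : K[X]) {r : K[X]} (hr : r.degree < n) :
    mulMat f a n *ᵥ (fun i : Fin n => r.coeff i) = fun i : Fin n => (a * r % f).coeff i := by
  ext i
  rw [mul_comm, mul_mod_eq_sum f r a hr, finsetSum_coeff, ← Fin.sum_univ_eq_sum_range]
  simp only [mulVec, dotProduct, mulMat, coeff_smul, smul_eq_mul, mul_comm]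

theorem mulMat_eq_sum {a : K[X]} (ha : a.degree < n) :
    mulMat f a n = ∑ j : Fin n, a.coeff j • mulMat f (X ^ (j : ℕ)) n := by
  ext i k
  simp only [mulMat, Matrix.sum_apply, Matrix.smul_apply, smul_eq_mul]
  rw [mul_comm, mul_mod_eq_sum f a _ ha, finsetSum_coeff, ← Fin.sum_univ_eq_sum_range]
  simp only [coeff_smul, smul_eq_mul, ← pow_add, add_comm]

theorem mulMat_pow_mulVec (hf : f.degree = n) (a : K[X]) {r : K[X]} (hr : r.degree < n)
    (e : ℕ) :
    mulMat f a n ^ e *ᵥ (fun i : Fin n => r.coeff i)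
      = fun i : Fin n => (a ^ e * r % f).coeff i := by
  have hf0 : f ≠ 0 := by rintro rfl; simp at hf
  induction e with
  | zero => rw [pow_zero, one_mulVec, pow_zero, one_mul, (mod_eq_self_iff hf0).2 (hf ▸ hr)]
  | succ e ih =>
    rw [pow_succ', ← mulVec_mulVec, ih, mulMat_mulVec a (hf ▸ EuclideanDomain.mod_lt _ hf0),
      mul_mod_mod, ← mul_assoc, ← pow_succ']

end MulMat

section Krylov

variable {f : K[X]} {n m d : ℕ}

theorem rightKrylov_mulMat_apply (hf : f.degree = n) (hmn : m ≤ n) (a : K[X]) (k : Fin n)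
    (q : Fin d × Fin m) :
    rightKrylov (mulMat f a n) m d k q = (a ^ (q.1 : ℕ) * X ^ (q.2 : ℕ) % f).coeff k := by
  have hdeg : (X ^ (q.2 : ℕ) : K[X]).degree < n := by
    rw [degree_X_pow]; exact_mod_cast q.2.2.trans_le hmn
  have hcol : (fun l : Fin n => Xup K n m l q.2)
      = fun l : Fin n => (X ^ (q.2 : ℕ) : K[X]).coeff l := by
    ext l; simp [Xup, coeff_X_pow]
  rw [← congrFun (mulMat_pow_mulVec hf a hdeg q.1) k, ← hcol]
  rfl

theorem leftKrylov_mulMat_mulVec (hf : f.degree = n) (hmn : m ≤ n) (a : K[X]) {r : K[X]}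
    (hr : r.degree < n) (p : Fin d × Fin m) :
    (leftKrylov (mulMat f a n) m d *ᵥ fun i : Fin n => r.coeff i) p
      = (a ^ (p.1 : ℕ) * r % f).coeff p.2 := by
  simp only [mulVec, dotProduct, leftKrylov, Xup_transpose_mul_apply hmn]
  exact congrFun (mulMat_pow_mulVec hf a hr p.1) (Fin.castLE hmn p.2)

theorem rightKrylov_submatrix_eq_one (hf : f.degree = n) (hmn : m ≤ n) (hnd : n ≤ d * m) :
    (rightKrylov (mulMat f (X ^ m % f) n) m d).submatrix id
      (fun t => finProdFinEquiv.symm (Fin.castLE hnd t)) = 1 := by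
  have hf0 : f ≠ 0 := by rintro rfl; simp at hf
  ext k t
  set q := finProdFinEquiv.symm (Fin.castLE hnd t)
  have hq : m * q.1 + q.2 = (t : ℕ) :=
    (add_comm _ _).trans (congrArg Fin.val (finProdFinEquiv.apply_symm_apply (Fin.castLE hnd t)))
  have hdeg : (X ^ (t : ℕ) : K[X]).degree < f.degree := by
    rw [degree_X_pow, hf]; exact_mod_cast t.2
  rw [submatrix_apply, id, rightKrylov_mulMat_apply hf hmn, pow_mod_mul_mod, ← pow_mul,
    ← pow_add, hq, (mod_eq_self_iff hf0).2 hdeg, coeff_X_pow, one_apply]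
  simp [Fin.ext_iff]

theorem leftKrylov_injective (hf : f.degree = n) (hf0 : f.eval 0 ≠ 0) (hmn : m ≤ n)
    (hnd : n ≤ m * d) : Function.Injective (leftKrylov (mulMat f (X ^ m % f) n) m d).mulVec := by
  refine (injective_iff_map_eq_zero (mulVecLin _)).2 fun v hv => ?_
  obtain ⟨r, hr, rfl⟩ : ∃ r : K[X], r.degree < n ∧ (fun i : Fin n => r.coeff i) = v :=
    ⟨(degreeLTEquiv K n).symm v, mem_degreeLT.1 (Subtype.prop _),
      (degreeLTEquiv K n).apply_symm_apply v⟩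
  have hr0 : r = 0 := by
    refine eq_zero_of_X_pow_dvd_mod hf0 (natDegree_eq_of_degree_eq_some hf ▸ hnd) (hf ▸ hr)
      fun i hi => X_pow_dvd_iff.2 fun j hj => ?_
    have := congrFun hv (⟨i, hi⟩, ⟨j, hj⟩)
    rwa [mulVecLin_apply, leftKrylov_mulMat_mulVec hf hmn _ hr, pow_mod_mul_mod,
      ← pow_mul] at this
  ext i
  simp [hr0]

theorem exists_mul_hankelMat_submatrix_eq_one (hf : f.degree = n) (hf0 : f.eval 0 ≠ 0)
    (hmn : m ≤ n) (hnd : n ≤ m * d) :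
    ∃ (U : Matrix (Fin n) (Fin d × Fin m) K) (σ : Fin n → Fin d × Fin m),
      U * (hankelMat f (X ^ m % f) n m d).submatrix id σ = 1 := by
  obtain ⟨U, hU⟩ := exists_mul_eq_one_of_injective_mulVec (leftKrylov_injective hf hf0 hmn hnd)
  have hnd' : n ≤ d * m := hnd.trans_eq (mul_comm m d)
  refine ⟨U, fun t => finProdFinEquiv.symm (Fin.castLE hnd' t), ?_⟩
  rw [hankelMat_eq_blockHankel, blockHankel_eq_mul, submatrix_mul _ _ _ id _ Function.bijective_id,
    submatrix_id_id, rightKrylov_submatrix_eq_one hf hmn hnd', Matrix.mul_one, hU]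

end Krylov

section Generic

variable {f : K[X]} {n m d : ℕ}

def genericMulMat (f : K[X]) (n : ℕ) : Matrix (Fin n) (Fin n) (MvPolynomial (Fin n) K) :=
  ∑ j : Fin n, (MvPolynomial.X j : MvPolynomial (Fin n) K) •
    (mulMat f (X ^ (j : ℕ)) n).map MvPolynomial.C

theorem genericMulMat_map_eval {a : K[X]} (ha : a.degree < n) :
    (genericMulMat f n).map (MvPolynomial.eval fun i : Fin n => a.coeff i) = mulMat f a n := by
  rw [mulMat_eq_sum ha]
  ext i k
  simp [genericMulMat, Matrix.sum_apply]

theorem totalDegree_genericMulMat_apply_le (i k : Fin n) :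
    (genericMulMat f n i k).totalDegree ≤ 1 := by
  simp only [genericMulMat, Matrix.sum_apply, Matrix.smul_apply, map_apply, smul_eq_mul]
  exact (MvPolynomial.totalDegree_finsetSum _ _).trans <| Finset.sup_le fun j _ =>
    (MvPolynomial.totalDegree_mul _ _).trans (by simp)

def genericHankelMinor (f : K[X]) (n m d : ℕ) (U : Matrix (Fin n) (Fin d × Fin m) K)
    (σ : Fin n → Fin d × Fin m) : MvPolynomial (Fin n) K :=
  (U.map (MvPolynomial.C (σ := Fin n)) *
    (blockHankel (genericMulMat f n) m d).submatrix id σ).det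

theorem eval_genericHankelMinor {a : K[X]} (ha : a.degree < n)
    (U : Matrix (Fin n) (Fin d × Fin m) K) (σ : Fin n → Fin d × Fin m) :
    MvPolynomial.eval (fun i : Fin n => a.coeff i) (genericHankelMinor f n m d U σ)
      = (U * (hankelMat f a n m d).submatrix id σ).det := by
  rw [genericHankelMinor, RingHom.map_det, RingHom.mapMatrix_apply, Matrix.map_mul,
    ← submatrix_map, blockHankel_map, genericMulMat_map_eval ha, hankelMat_eq_blockHankel]
  congr
  ext
  simp

theorem totalDegree_genericHankelMinor_le (U : Matrix (Fin n) (Fin d × Fin m) K)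
    (σ : Fin n → Fin d × Fin m) :
    (genericHankelMinor f n m d U σ).totalDegree ≤ n * (2 * (d - 1)) := by
  refine (totalDegree_det_le (D := 2 * (d - 1)) fun i j => ?_).trans (by simp)
  refine (totalDegree_mul_apply_le (a := 0) (b := 2 * (d - 1)) (fun _ _ => by simp)
    (fun k t => ?_) i j).trans (by simp)
  refine (totalDegree_blockHankel_apply_le totalDegree_genericMulMat_apply_le _ _).trans ?_
  have := k.1.2
  have := (σ t).1.2
  omega

theorem rank_hankelMat_eq_of_det_ne_zero {a : K[X]} {d₀ : ℕ}
    {U : Matrix (Fin n) (Fin d₀ × Fin m) K} {σ : Fin n → Fin d₀ × Fin m}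
    (hdet : (U * (hankelMat f a n m d₀).submatrix id σ).det ≠ 0) (hd : d₀ ≤ d) :
    (hankelMat f a n m d).rank = n := by
  refine le_antisymm (rank_blockHankel_le _ m d) ?_
  let ι : Fin d₀ × Fin m → Fin d × Fin m := Prod.map (Fin.castLE hd) id
  have hsub : (hankelMat f a n m d₀).submatrix id σ
      = (hankelMat f a n m d).submatrix ι (ι ∘ σ) := rfl
  calc n = (U * (hankelMat f a n m d₀).submatrix id σ).rank := by
        rw [rank_of_isUnit _ ((isUnit_iff_isUnit_det _).2 (isUnit_iff_ne_zero.2 hdet)),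
          Fintype.card_fin]
    _ ≤ ((hankelMat f a n m d₀).submatrix id σ).rank := rank_mul_le_right _ _
    _ ≤ (hankelMat f a n m d).rank := by rw [hsub]; exact rank_submatrix_le _ _ _

end Generic

/-- for `f` with `f(0) ≠ 0` there is a nonzero polynomial `Δ_{f,m}` in the
coefficients of `a`, of total degree at most `2n²/m`, whose nonvanishing at the coefficients
of `a` ensures that the block Hankel matrix has rank `n` for all `d ≥ ⌈n/m⌉`. -/
theorem exists_generic_rank_polynomial
    (n m : ℕ) (hm : 1 ≤ m) (hmn : m ≤ n)
    (f : K[X]) (hf : f.natDegree = n) (hf0 : f.eval 0 ≠ 0) :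
    ∃ Δ : MvPolynomial (Fin n) K, Δ ≠ 0 ∧ m * Δ.totalDegree ≤ 2 * n ^ 2 ∧
      ∀ a : K[X], a.degree < (n : WithBot ℕ) →
        MvPolynomial.eval (fun i : Fin n => a.coeff (i : ℕ)) Δ ≠ 0 →
        ∀ d : ℕ, n ⌈/⌉ m ≤ d → (hankelMat f a n m d).rank = n := by
  have hf' : f.degree = n := (degree_eq_iff_natDegree_eq_of_pos (hm.trans hmn)).2 hf
  set d₀ := n ⌈/⌉ m
  have hnd : n ≤ m * d₀ := (ceilDiv_le_iff_le_mul hm).1 le_rfl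
  have hd₀ : m * (d₀ - 1) ≤ n := by
    by_contra! h
    have h₀ : d₀ = 0 := by have := (ceilDiv_le_iff_le_mul hm).2 h.le; omega
    simp [h₀] at h
  obtain ⟨U, σ, hU⟩ := exists_mul_hankelMat_submatrix_eq_one hf' hf0 hmn hnd
  refine ⟨genericHankelMinor f n m d₀ U σ, fun h => ?_, ?_, fun a ha hΔ d hd =>
    rank_hankelMat_eq_of_det_ne_zero (by rwa [← eval_genericHankelMinor ha]) hd⟩
  · have hf₀ : f ≠ 0 := by rintro rfl; simp at hf0
    have := eval_genericHankelMinor (f := f) (hf' ▸ degree_mod_lt (X ^ m) hf₀) U σ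
    simp [h, hU] at this
  · calc m * (genericHankelMinor f n m d₀ U σ).totalDegree
        ≤ m * (n * (2 * (d₀ - 1))) := Nat.mul_le_mul_left m (totalDegree_genericHankelMinor_le ..)
      _ = 2 * n * (m * (d₀ - 1)) := by ring
      _ ≤ 2 * n * n := Nat.mul_le_mul_left _ hd₀
      _ = 2 * n ^ 2 := by ring
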